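/- arXiv:2309.03025 — 2 statements merged into one kernel-verified Lean document; each statement's English description precedes it below -/
import Mathlib

section
/- Let M > 0, q ∈ [−1,1], r ≥ r₊ = M(1+√(1−q²)), and x ∈ (−1, 0). Set A = 2M/r − q²M²/r² and f = 1 − A. Then the quadratic form Q(p, s) = (1+A)p² + 2(1+A)x·p·s + (f − 2Ax)s² is positive definite: Q(p,s) > 0 for all (p,s) ≠ (0,0). -/
/-- For `M > 0`, `q ∈ [−1,1]`, `r ≥ r₊ = M(1+√(1−q²))`, `x ∈ (−1,0)`,
with `A = 2M/r − q²M²/r²` and `f = 1 − A`, the quadratic form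
`Q(p,s) = (1+A)p² + 2(1+A)x·p·s + (f − 2Ax)s²` is positive definite. -/
theorem stmt_3 (M q r x : ℝ) (hM : 0 < M) (hq : q ∈ Set.Icc (-1 : ℝ) 1)
    (hr : M * (1 + Real.sqrt (1 - q ^ 2)) ≤ r) (hx : x ∈ Set.Ioo (-1 : ℝ) 0)
    (A f : ℝ) (hA : A = 2 * M / r - q ^ 2 * M ^ 2 / r ^ 2) (hfA : f = 1 - A) :
    ∀ p s : ℝ, (p, s) ≠ (0, 0) →
      0 < (1 + A) * p ^ 2 + 2 * (1 + A) * x * p * s + (f - 2 * A * x) * s ^ 2 := by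
  obtain ⟨hq1, hq2⟩ := hq
  obtain ⟨hx1, hx2⟩ := hx
  have hq2' : q ^ 2 ≤ 1 := by nlinarith
  have hs0 : 0 ≤ Real.sqrt (1 - q ^ 2) := Real.sqrt_nonneg _
  have hs0sq : Real.sqrt (1 - q ^ 2) ^ 2 = 1 - q ^ 2 := Real.sq_sqrt (by linarith)
  have hrM : M ≤ r := by nlinarith
  have hr0 : 0 < r := lt_of_lt_of_le hM hrM
  have hAeq : A = (2 * M * r - q ^ 2 * M ^ 2) / r ^ 2 := by
    rw [hA]; field_simp
  have hA0 : 0 ≤ A := by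
    rw [hAeq]
    apply div_nonneg _ (sq_nonneg r)
    nlinarith
  have hA1 : A ≤ 1 := by
    rw [hAeq]
    rw [div_le_one (by positivity)]
    have h2 : M * Real.sqrt (1 - q ^ 2) ≤ r - M := by nlinarith
    have h3 : (M * Real.sqrt (1 - q ^ 2)) ^ 2 ≤ (r - M) ^ 2 :=
      pow_le_pow_left₀ (by positivity) h2 2
    nlinarith [h3]
  have hc : 0 < (1 + x) * ((1 - x) - A * (1 + x)) := by
    apply mul_pos (by linarith)
    nlinarith
  intro p s hps
  have key : (1 + A) * p ^ 2 + 2 * (1 + A) * x * p * s + (f - 2 * A * x) * s ^ 2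
      = (1 + A) * (p + x * s) ^ 2 + ((1 + x) * ((1 - x) - A * (1 + x))) * s ^ 2 := by
    rw [hfA]; ring
  rw [key]
  rcases eq_or_ne s 0 with hs | hs
  · have hp : p ≠ 0 := by
      intro h; exact hps (by simp [h, hs])
    have : 0 < (p + x * s) ^ 2 := by
      rw [hs]; simpa using pow_pos (abs_pos.2 hp) 2 |>.trans_eq (by rw [sq_abs])
    nlinarith [sq_nonneg s]
  · have hs2 : 0 < s ^ 2 := pow_pos (abs_pos.2 hs) 2 |>.trans_eq (sq_abs s)
    nlinarith [sq_nonneg (p + x * s), mul_pos hc hs2]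
end

section
/- Let M > 0, q ∈ [−1,1], k ∈ ℝ, and 0 < E < 1. Then there exists r₀ ∈ [r₊, ∞), where r₊ = M(1+√(1−q²)), such that (E − k/r₀)² = f(r₀), where f(r) = 1 − 2M/r + q²M²/r². -/
/-!
The outer horizon `r₊` is a root of `f`, so `(E - k/r)² - f(r)` is `≥ 0` at `r₊`, while it tends to
`E² - 1 < 0` as `r → ∞`; the intermediate value theorem on `[r₊, ∞)` gives the turning radius.
-/

open Filter Set Topology

noncomputable section

namespace ReissnerNordstrom

def metricF (M q r : ℝ) : ℝ := 1 - 2 * M / r + q ^ 2 * M ^ 2 / r ^ 2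

def outerHorizon (M q : ℝ) : ℝ := M * (1 + Real.sqrt (1 - q ^ 2))

variable {M q : ℝ}

theorem outerHorizon_pos (hM : 0 < M) : 0 < outerHorizon M q := by
  unfold outerHorizon; positivity

theorem metricF_outerHorizon (hM : M ≠ 0) (hq : q ^ 2 ≤ 1) :
    metricF M q (outerHorizon M q) = 0 := by
  have hs : Real.sqrt (1 - q ^ 2) ^ 2 = 1 - q ^ 2 := Real.sq_sqrt (by linarith)
  have hr : outerHorizon M q ≠ 0 := by
    unfold outerHorizon
    exact mul_ne_zero hM (by positivity)
  unfold metricF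
  field_simp
  unfold outerHorizon
  linear_combination M ^ 2 * hs

theorem continuousOn_metricF : ContinuousOn (metricF M q) (Ioi 0) := by
  unfold metricF
  fun_prop (disch := intro r (hr : 0 < r); positivity)

theorem tendsto_metricF_atTop : Tendsto (metricF M q) atTop (𝓝 1) := by
  have h := tendsto_inv_atTop_zero (𝕜 := ℝ)
  have key := (tendsto_const_nhds (x := (1 : ℝ)) |>.sub (h.const_mul (2 * M))).add
    ((h.pow 2).const_mul (q ^ 2 * M ^ 2))
  convert key using 2
  · simp only [metricF]; ring
  · simp

end ReissnerNordstrom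

end

open ReissnerNordstrom

/-- For `M > 0`, `q ∈ [−1,1]`, `k ∈ ℝ`, and `0 < E < 1`, there exists
`r₀ ∈ [r₊, ∞)`, `r₊ = M(1+√(1−q²))`, such that `(E − k/r₀)² = f(r₀)`, where
`f(r) = 1 − 2M/r + q²M²/r²` (a turning radius for the collapsing surface). -/
theorem stmt_8 (M q k E : ℝ) (hM : 0 < M) (hq : q ∈ Set.Icc (-1 : ℝ) 1)
    (hE : 0 < E) (hE1 : E < 1)
    (rp : ℝ) (hrp : rp = M * (1 + Real.sqrt (1 - q ^ 2)))
    (f : ℝ → ℝ) (hf : ∀ r, f r = 1 - 2 * M / r + q ^ 2 * M ^ 2 / r ^ 2) :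
    ∃ r₀ ∈ Set.Ici rp, (E - k / r₀) ^ 2 = f r₀ := by
  obtain rfl : f = metricF M q := funext hf
  replace hrp : rp = outerHorizon M q := hrp
  have hq2 : q ^ 2 ≤ 1 := sq_le_one_iff_abs_le_one q |>.2 (abs_le.2 hq)
  have hpos : Ici rp ⊆ Ioi 0 :=
    Ici_subset_Ioi.2 (hrp ▸ outerHorizon_pos hM)
  have hpot : Tendsto (fun r => (E - k / r) ^ 2) atTop (𝓝 (E ^ 2)) := by
    simpa using ((tendsto_const_nhds (x := E)).sub
      ((tendsto_const_nhds (x := k)).div_atTop tendsto_id)).pow 2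
  have hpot_cont : ContinuousOn (fun r => (E - k / r) ^ 2) (Ioi 0) := by
    fun_prop (disch := intro r (hr : 0 < r); positivity)
  obtain ⟨r₀, hr₀, h⟩ := isPreconnected_Ici.intermediate_value₂_eventually₁ self_mem_Ici
    (le_principal_iff.2 (Ici_mem_atTop rp))
    (continuousOn_metricF.mono hpos) (hpot_cont.mono hpos)
    (by rw [hrp, metricF_outerHorizon hM.ne' hq2]; positivity)
    ((hpot.eventually_lt tendsto_metricF_atTop (by nlinarith)).mono
      fun _ => le_of_lt)
  exact ⟨r₀, hr₀, h.symm⟩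
end
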